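/- arXiv:2107.00365 — 9 statements merged into one kernel-verified Lean document; each statement's English description precedes it below -/
import Mathlib

section
/- Let κ > 0 and let x, y, z be points on the sphere M_κ² (the 2-sphere of curvature κ, i.e., the sphere of radius 1/√κ with its intrinsic metric) with d(y,x) < π/(2√κ), d(z,x) < π/√κ, and the angle at x between the geodesics from x to y and from x to z strictly less than π/2. Then for every t > 0 there exists a point u on the geodesic segment [x,z] with d(x,u) < t and d(y,u) < d(y,x). -/
open scoped RealInnerProductSpace

/-- Distance on `M_κ²` (the sphere of curvature `κ > 0`), points modeled as unit
vectors in `ℝ³`: the distance is the angle between them scaled by `1/√κ`. -/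
noncomputable def sphDist (κ : ℝ) (x y : EuclideanSpace ℝ (Fin 3)) : ℝ :=
  Real.arccos ⟪x, y⟫ / Real.sqrt κ

/-- The (Riemannian/Alexandrov) angle at `x` between the geodesics from `x` to `y`
and from `x` to `z`, computed via the tangent vectors at `x`. -/
noncomputable def sphAngle (x y z : EuclideanSpace ℝ (Fin 3)) : ℝ :=
  InnerProductGeometry.angle (y - ⟪x, y⟫ • x) (z - ⟪x, z⟫ • x)

/-- The point of parameter `s ∈ [0,1]` on the geodesic segment from `x` to `z`
on the sphere (great-circle arc). -/
noncomputable def sphGeodPt (x z : EuclideanSpace ℝ (Fin 3)) (s : ℝ) :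
    EuclideanSpace ℝ (Fin 3) :=
  (Real.sin ((1 - s) * Real.arccos ⟪x, z⟫) / Real.sin (Real.arccos ⟪x, z⟫)) • x +
    (Real.sin (s * Real.arccos ⟪x, z⟫) / Real.sin (Real.arccos ⟪x, z⟫)) • z

/-- Inner product of any vector with a point on the geodesic. -/
lemma inner_sphGeodPt (x z w : EuclideanSpace ℝ (Fin 3)) (s : ℝ) :
    ⟪w, sphGeodPt x z s⟫ =
      (Real.sin ((1 - s) * Real.arccos ⟪x, z⟫) / Real.sin (Real.arccos ⟪x, z⟫)) * ⟪w, x⟫ +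
      (Real.sin (s * Real.arccos ⟪x, z⟫) / Real.sin (Real.arccos ⟪x, z⟫)) * ⟪w, z⟫ := by
  rw [sphGeodPt, inner_add_right, real_inner_smul_right, real_inner_smul_right]

lemma key_ineq (p sc ca θ S C : ℝ) (hp : 0 < p) (hsc : 0 < sc) (hca : 0 < ca)
    (hθ : 0 < θ) (hθ1 : θ ≤ 1) (hK : 2*p*θ ≤ sc*ca)
    (hS : θ - θ^3/4 < S) (hC : 1 - θ^2/2 ≤ C) : p < p*C + sc*S*ca := by
  have hθ3 : θ^3 ≤ θ := by nlinarith
  have hS34 : 3*θ/4 < S := by nlinarith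
  have hS0 : 0 ≤ S := by linarith
  have h1 : p*(1 - θ^2/2) ≤ p*C := mul_le_mul_of_nonneg_left hC hp.le
  have h2 : (2*p*θ)*S ≤ (sc*ca)*S := mul_le_mul_of_nonneg_right hK hS0
  have h3 : (2*p*θ)*(3*θ/4) < (2*p*θ)*S :=
    mul_lt_mul_of_pos_left hS34 (by positivity)
  nlinarith [mul_pos (mul_pos hp hθ) hθ]

theorem small_angle_descent (κ : ℝ) (hκ : 0 < κ) (x y z : EuclideanSpace ℝ (Fin 3))
    (hx : ‖x‖ = 1) (hy : ‖y‖ = 1) (hz : ‖z‖ = 1)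
    (hxy : x ≠ y) (hxz : x ≠ z)
    (hdy : sphDist κ y x < Real.pi / (2 * Real.sqrt κ))
    (hdz : sphDist κ z x < Real.pi / Real.sqrt κ)
    (hang : sphAngle x y z < Real.pi / 2) :
    ∀ t > 0, ∃ u : EuclideanSpace ℝ (Fin 3),
      (∃ s ∈ Set.Icc (0 : ℝ) 1, u = sphGeodPt x z s) ∧
      sphDist κ x u < t ∧ sphDist κ y u < sphDist κ y x := by
  intro t ht
  have hκ' : 0 < Real.sqrt κ := Real.sqrt_pos.mpr hκ
  set p : ℝ := ⟪x, y⟫ with hpdef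
  set q : ℝ := ⟪x, z⟫ with hqdef
  set r : ℝ := ⟪y, z⟫ with hrdef
  set c : ℝ := Real.arccos p with hcdef
  set b : ℝ := Real.arccos q with hbdef
  set α : ℝ := sphAngle x y z with hαdef
  -- basic bounds on inner products
  have hple : p ≤ 1 := by
    have := real_inner_le_norm x y; rwa [hx, hy, one_mul] at this
  have hqle : q ≤ 1 := by
    have := real_inner_le_norm x z; rwa [hx, hz, one_mul] at this
  have hpge : -1 ≤ p := by
    have := abs_real_inner_le_norm x y; rw [hx, hy, one_mul] at this
    linarith [neg_abs_le p, this]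
  have hqge : -1 ≤ q := by
    have := abs_real_inner_le_norm x z; rw [hx, hz, one_mul] at this
    linarith [neg_abs_le q, this]
  have hplt : p < 1 :=
    lt_of_le_of_ne hple fun h => hxy ((inner_eq_one_iff_of_norm_eq_one hx hy).mp h)
  have hqlt : q < 1 :=
    lt_of_le_of_ne hqle fun h => hxz ((inner_eq_one_iff_of_norm_eq_one hx hz).mp h)
  -- angle bounds
  have hyx : (⟪y, x⟫ : ℝ) = p := (real_inner_comm y x).symm
  have hzx : (⟪z, x⟫ : ℝ) = q := (real_inner_comm z x).symm
  have hclt : c < Real.pi / 2 := by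
    have h := hdy
    rw [sphDist, hyx, show Real.pi / (2 * Real.sqrt κ) = (Real.pi / 2) / Real.sqrt κ by ring]
      at h
    calc c = (c / Real.sqrt κ) * Real.sqrt κ := by field_simp
    _ < ((Real.pi / 2) / Real.sqrt κ) * Real.sqrt κ := mul_lt_mul_of_pos_right h hκ'
    _ = Real.pi / 2 := by field_simp
  have hblt : b < Real.pi := by
    have h := hdz
    rw [sphDist, hzx] at h
    calc b = (b / Real.sqrt κ) * Real.sqrt κ := by field_simp
    _ < (Real.pi / Real.sqrt κ) * Real.sqrt κ := by
        exact mul_lt_mul_of_pos_right h hκ'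
    _ = Real.pi := by field_simp
  have hcpos : 0 < c := Real.arccos_pos.mpr hplt
  have hbpos : 0 < b := Real.arccos_pos.mpr hqlt
  have hcosc : Real.cos c = p := Real.cos_arccos hpge hple
  have hcosb : Real.cos b = q := Real.cos_arccos hqge hqle
  have hppos : 0 < p := Real.arccos_lt_pi_div_two.mp hclt
  have hsinb : 0 < Real.sin b :=
    Real.sin_pos_of_pos_of_lt_pi hbpos hblt
  have hsinc : 0 < Real.sin c :=
    Real.sin_pos_of_pos_of_lt_pi hcpos (by linarith [Real.pi_pos])
  -- the tangent vectors
  have hv2 : ‖y - p • x‖ ^ 2 = 1 - p ^ 2 := by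
    rw [norm_sub_sq_real, hy, norm_smul, hx, real_inner_smul_right, hyx]
    simp [Real.norm_eq_abs, sq_abs]; ring
  have hw2 : ‖z - q • x‖ ^ 2 = 1 - q ^ 2 := by
    rw [norm_sub_sq_real, hz, norm_smul, hx, real_inner_smul_right, hzx]
    simp [Real.norm_eq_abs, sq_abs]; ring
  have hvnorm : ‖y - p • x‖ = Real.sin c := by
    rw [hcdef, Real.sin_arccos, ← hv2, Real.sqrt_sq (norm_nonneg _)]
  have hwnorm : ‖z - q • x‖ = Real.sin b := by
    rw [hbdef, Real.sin_arccos, ← hw2, Real.sqrt_sq (norm_nonneg _)]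
  have hxx : (⟪x, x⟫ : ℝ) = 1 := by
    rw [real_inner_self_eq_norm_sq, hx]; norm_num
  have hvw : ⟪y - p • x, z - q • x⟫ = r - p * q := by
    simp only [inner_sub_left, inner_sub_right, real_inner_smul_left,
      real_inner_smul_right, hxx, hyx, ← hrdef, ← hqdef, ← hpdef]
    ring
  have hcosα : Real.cos α = (r - p * q) / (Real.sin c * Real.sin b) := by
    rw [hαdef, sphAngle, ← hpdef, ← hqdef, InnerProductGeometry.cos_angle, hvw, hvnorm, hwnorm]
  have hcosαpos : 0 < Real.cos α := by
    apply Real.cos_pos_of_mem_Ioo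
    constructor
    · have := InnerProductGeometry.angle_nonneg (y - p • x) (z - q • x)
      rw [hαdef, sphAngle, ← hpdef, ← hqdef]
      have hπ := Real.pi_pos
      linarith
    · exact hang
  have hrval : r = p * q + Real.sin c * Real.sin b * Real.cos α := by
    rw [hcosα]; field_simp; ring
  have hcosαle : Real.cos α ≤ 1 := Real.cos_le_one α
  -- choose the parameter
  set θ₀ : ℝ := min 1 (min (Real.sin c * Real.cos α / (2 * p)) (t * Real.sqrt κ / 2))
    with hθ₀def
  have hθ₀pos : 0 < θ₀ := by
    apply lt_min; norm_num
    apply lt_min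
    · positivity
    · positivity
  set s : ℝ := min 1 (θ₀ / b) with hsdef
  have hspos : 0 < s := lt_min one_pos (div_pos hθ₀pos hbpos)
  have hsle : s ≤ 1 := min_le_left _ _
  set θ : ℝ := s * b with hθdef
  have hθpos : 0 < θ := mul_pos hspos hbpos
  have hθleb : θ ≤ b := by
    calc θ = s * b := rfl
    _ ≤ 1 * b := mul_le_mul_of_nonneg_right hsle hbpos.le
    _ = b := one_mul b
  have hθle0 : θ ≤ θ₀ := by
    have : s ≤ θ₀ / b := min_le_right _ _
    calc θ = s * b := rfl
    _ ≤ (θ₀ / b) * b := mul_le_mul_of_nonneg_right this hbpos.le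
    _ = θ₀ := by field_simp
  have hθle1 : θ ≤ 1 := hθle0.trans (min_le_left _ _)
  have hθK : θ ≤ Real.sin c * Real.cos α / (2 * p) :=
    hθle0.trans ((min_le_right _ _).trans (min_le_left _ _))
  have hθt : θ < t * Real.sqrt κ := by
    have h1 : θ ≤ t * Real.sqrt κ / 2 :=
      hθle0.trans ((min_le_right _ _).trans (min_le_right _ _))
    have : 0 < t * Real.sqrt κ := by positivity
    linarith
  -- the point u
  refine ⟨sphGeodPt x z s, ⟨s, ⟨hspos.le, hsle⟩, rfl⟩, ?_, ?_⟩
  · -- d(x,u) < t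
    have hinner : ⟪x, sphGeodPt x z s⟫ = Real.cos θ := by
      rw [inner_sphGeodPt, ← hqdef, ← hbdef, real_inner_self_eq_norm_sq, hx,
        show (1 - s) * b = b - s * b by ring, Real.sin_sub, hcosb, ← hθdef]
      field_simp
      ring
    rw [sphDist, hinner, Real.arccos_cos hθpos.le (hθleb.trans hblt.le)]
    rw [div_lt_iff₀ hκ']
    linarith [hθt]
  · -- d(y,u) < d(y,x)
    have hinner : ⟪y, sphGeodPt x z s⟫
        = p * Real.cos θ + Real.sin c * Real.sin θ * Real.cos α := by
      rw [inner_sphGeodPt, ← hqdef, ← hbdef, hyx, ← hrdef, hrval,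
        show (1 - s) * b = b - s * b by ring, Real.sin_sub, hcosb, ← hθdef]
      field_simp
      ring
    set I : ℝ := p * Real.cos θ + Real.sin c * Real.sin θ * Real.cos α with hIdef
    clear_value I θ s θ₀ r α b c q p
    clear hvw hcosα hrval hv2 hw2 hvnorm hwnorm hxx hdy hdz hzx hpdef hqdef hrdef hαdef hang hxy hxz hplt hqlt
    have hsinθpos : 0 < Real.sin θ := Real.sin_pos_of_pos_of_lt_pi hθpos
      (by linarith [Real.pi_gt_three])
    -- key inequality: I > p
    have hsin_lb : θ - θ ^ 3 / 4 < Real.sin θ := by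
      have h := Real.sin_gt_sub_cube hθpos; have : 0 < θ ^ 3 := by positivity
      linarith
    have hcos_lb : 1 - θ ^ 2 / 2 ≤ Real.cos θ := Real.one_sub_sq_div_two_le_cos
    have hKθ : 2 * p * θ ≤ Real.sin c * Real.cos α := by
      rw [le_div_iff₀ (by positivity : (0:ℝ) < 2 * p)] at hθK
      linarith [hθK]
    have hIgt : p < I := by
      rw [hIdef]
      exact key_ineq p (Real.sin c) (Real.cos α) θ (Real.sin θ) (Real.cos θ)
        hppos hsinc hcosαpos hθpos hθle1 hKθ hsin_lb hcos_lb
    -- I ≤ 1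
    have hIle : I ≤ 1 := by
      have h1 : p * Real.cos θ + Real.sin c * Real.sin θ = Real.cos (c - θ) := by
        rw [Real.cos_sub, hcosc]
      have h2 : Real.sin c * Real.sin θ * Real.cos α ≤ Real.sin c * Real.sin θ :=
        mul_le_of_le_one_right (by positivity) hcosαle
      have := Real.cos_le_one (c - θ)
      linarith
    rw [sphDist, sphDist, hinner, hyx]
    have harc : Real.arccos I < Real.arccos p :=
      Real.strictAntiOn_arccos ⟨hpge, hple⟩ ⟨by linarith, hIle⟩ hIgt
    exact (div_lt_div_iff_of_pos_right hκ').mpr harc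
end

section
/- Let A be a closed subset of ℝⁿ and z ∈ A. If there exists r > 0 such that A ∩ closedBall(z,r) has positive reach, then A is prox-regular at z, i.e., there exists R > 0 such that P_A(x) is a singleton for every x ∈ B(z,R). -/
/-- The set of nearest points of `x` in `C` (the metric projection `P_C(x)`). -/
def projSet {n : ℕ} (C : Set (EuclideanSpace ℝ (Fin n))) (x : EuclideanSpace ℝ (Fin n)) :
    Set (EuclideanSpace ℝ (Fin n)) :=
  {y ∈ C | dist x y = Metric.infDist x C}

/-- If the intersection of `A` with some closed ball around `z` has positive reach,
then `A` is prox-regular at `z`. -/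
theorem local_positive_reach_implies_proxRegular {n : ℕ}
    (A : Set (EuclideanSpace ℝ (Fin n))) (hA : IsClosed A)
    (z : EuclideanSpace ℝ (Fin n)) (hz : z ∈ A)
    (hreach : ∃ r > (0 : ℝ), ∃ δ > (0 : ℝ), ∀ y : EuclideanSpace ℝ (Fin n),
      Metric.infDist y (A ∩ Metric.closedBall z r) < δ →
        ∃ p, projSet (A ∩ Metric.closedBall z r) y = {p}) :
    ∃ R > (0 : ℝ), ∀ x ∈ Metric.ball z R, ∃ y, projSet A x = {y} := by
  obtain ⟨r, hr, δ, hδ, huniq⟩ := hreach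
  set C := A ∩ Metric.closedBall z r with hC
  have hzC : z ∈ C := ⟨hz, Metric.mem_closedBall_self hr.le⟩
  have hCne : C.Nonempty := ⟨z, hzC⟩
  have hAne : A.Nonempty := ⟨z, hz⟩
  refine ⟨min (r / 2) δ, lt_min (by linarith) hδ, ?_⟩
  intro x hx
  rw [Metric.mem_ball] at hx
  have hxz : dist x z < min (r / 2) δ := hx
  have hxr : dist x z < r / 2 := lt_of_lt_of_le hxz (min_le_left _ _)
  have hxδ : dist x z < δ := lt_of_lt_of_le hxz (min_le_right _ _)
  -- the nearest point of x in A
  obtain ⟨y₀, hy₀A, hy₀d⟩ := hA.exists_infDist_eq_dist hAne x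
  have hdA : Metric.infDist x A ≤ dist x z := Metric.infDist_le_dist_of_mem hz
  -- y₀ ∈ C
  have hy₀C : y₀ ∈ C := by
    refine ⟨hy₀A, ?_⟩
    rw [Metric.mem_closedBall]
    have : dist y₀ z ≤ dist y₀ x + dist x z := dist_triangle _ _ _
    rw [dist_comm y₀ x] at this
    have h1 : dist x y₀ ≤ dist x z := by rw [← hy₀d]; exact hdA
    linarith
  -- infDist x C = infDist x A
  have hle : Metric.infDist x A ≤ Metric.infDist x C :=
    Metric.infDist_le_infDist_of_subset Set.inter_subset_left hCne
  have hge : Metric.infDist x C ≤ Metric.infDist x A := by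
    rw [hy₀d]; exact Metric.infDist_le_dist_of_mem hy₀C
  have heq : Metric.infDist x C = Metric.infDist x A := le_antisymm hge hle
  -- projSet A x = projSet C x
  have hproj : projSet A x = projSet C x := by
    ext p
    simp only [projSet, Set.mem_setOf_eq, heq]
    constructor
    · rintro ⟨hpA, hpd⟩
      refine ⟨⟨hpA, ?_⟩, hpd⟩
      rw [Metric.mem_closedBall]
      have h1 : dist p z ≤ dist p x + dist x z := dist_triangle _ _ _
      rw [dist_comm p x] at h1
      have h2 : dist x p ≤ dist x z := by rw [hpd]; exact hdA
      linarith
    · rintro ⟨hpC, hpd⟩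
      exact ⟨hpC.1, hpd⟩
  obtain ⟨p, hp⟩ := huniq x (lt_of_le_of_lt (heq ▸ hdA) hxδ)
  exact ⟨p, hproj.trans hp⟩
end

section
/- Let C ⊆ ℝⁿ be convex, u ∈ C, and F : ℝⁿ → ℝᵐ differentiable in a neighborhood of u with derivative DF continuous at u and DF(u) injective. Suppose F restricted to C is a homeomorphism onto F(C). Then F(C) is uniformly approximable by geodesics at F(u): for every ε > 0 there exists R > 0 such that for any two distinct points x, x' ∈ B(F(u), R) ∩ F(C) there exist a curve f : [0,l] → F(C) with f(0) = x, f(l) = x' and a straight-line segment (unit-speed geodesic) γ : [0,l] → ℝᵐ with γ(0) = x such that ‖f(t) − γ(t)‖ < εt for all t ∈ (0,l]. -/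
set_option maxHeartbeats 1000000


/-- The image of a convex set under a suitably smooth map with injective derivative,
which is a homeomorphism onto its image, is uniformly approximable by geodesics
at the image of any point of the set. -/
theorem image_convex_UAG {n m : ℕ}
    (C : Set (EuclideanSpace ℝ (Fin n))) (hC : Convex ℝ C)
    (u : EuclideanSpace ℝ (Fin n)) (hu : u ∈ C)
    (F : EuclideanSpace ℝ (Fin n) → EuclideanSpace ℝ (Fin m))
    (V : Set (EuclideanSpace ℝ (Fin n))) (hV : V ∈ nhds u)
    (hdiff : ∀ x ∈ V, DifferentiableAt ℝ F x)
    (hcont : ContinuousAt (fderiv ℝ F) u)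
    (hinj : Function.Injective (fderiv ℝ F u))
    (hhomeo : ∃ e : C ≃ₜ (F '' C), ∀ x : C, ((e x : F '' C) : EuclideanSpace ℝ (Fin m)) = F x) :
    ∀ ε > (0 : ℝ), ∃ R > (0 : ℝ),
      ∀ x ∈ Metric.ball (F u) R ∩ F '' C, ∀ x' ∈ Metric.ball (F u) R ∩ F '' C, x ≠ x' →
        ∃ l > (0 : ℝ), ∃ f : ℝ → EuclideanSpace ℝ (Fin m), ∃ v : EuclideanSpace ℝ (Fin m),
          ‖v‖ = 1 ∧ (∀ t ∈ Set.Icc (0 : ℝ) l, f t ∈ F '' C) ∧ f 0 = x ∧ f l = x' ∧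
            ∀ t : ℝ, 0 < t → t ≤ l → ‖f t - (x + t • v)‖ < ε * t := by
  obtain ⟨e, he⟩ := hhomeo
  intro ε hε
  set A := fderiv ℝ F u with hA
  obtain ⟨K, hK0, hKA⟩ := LinearMap.exists_antilipschitzWith A.toLinearMap
    (LinearMap.ker_eq_bot.mpr (by simpa using hinj))
  set c : ℝ := (K : ℝ) with hcdef
  have hc0 : (0 : ℝ) < c := hK0
  have hanti : ∀ w : EuclideanSpace ℝ (Fin n), ‖w‖ ≤ c * ‖A w‖ := by
    intro w
    have := hKA.le_mul_dist w 0
    simpa [dist_eq_norm] using this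
  set δ : ℝ := min (1 / (2 * c)) (ε / (5 * c)) with hδdef
  have hδ0 : 0 < δ := lt_min (by positivity) (by positivity)
  have hδ1 : δ ≤ 1 / (2 * c) := min_le_left _ _
  have hδ2 : δ ≤ ε / (5 * c) := min_le_right _ _
  obtain ⟨ρ₁, hρ₁0, hρ₁⟩ := Metric.mem_nhds_iff.mp hV
  rw [Metric.continuousAt_iff] at hcont
  obtain ⟨ρ₂, hρ₂0, hρ₂⟩ := hcont δ hδ0
  set ρ : ℝ := min ρ₁ ρ₂ with hρdef
  have hρ0 : 0 < ρ := lt_min hρ₁0 hρ₂0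
  have hballV : Metric.ball u ρ ⊆ V :=
    (Metric.ball_subset_ball (min_le_left _ _)).trans hρ₁
  have hdiff' : ∀ y ∈ Metric.ball u ρ, DifferentiableAt ℝ F y :=
    fun y hy => hdiff y (hballV hy)
  have hbound : ∀ y ∈ Metric.ball u ρ, ‖fderiv ℝ F y - A‖ ≤ δ := by
    intro y hy
    have h := hρ₂ (lt_of_lt_of_le (Metric.mem_ball.mp hy) (min_le_right _ _))
    rw [dist_eq_norm] at h
    exact h.le
  have mvt : ∀ p ∈ Metric.ball u ρ, ∀ q ∈ Metric.ball u ρ,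
      ‖F q - F p - A (q - p)‖ ≤ δ * ‖q - p‖ := fun p hp q hq =>
    (convex_ball u ρ).norm_image_sub_le_of_norm_fderiv_le' hdiff' hbound hp hq
  have hgcont : ContinuousAt
      (fun y : (F '' C) => ((e.symm y : C) : EuclideanSpace ℝ (Fin n))) (e ⟨u, hu⟩) :=
    (continuous_subtype_val.comp e.symm.continuous).continuousAt
  rw [Metric.continuousAt_iff] at hgcont
  obtain ⟨R, hR0, hR⟩ := hgcont ρ hρ0
  refine ⟨R, hR0, ?_⟩
  intro x hx x' hx' hxx'
  have key : ∀ z, z ∈ Metric.ball (F u) R ∩ F '' C →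
      ∃ a, a ∈ C ∧ F a = z ∧ a ∈ Metric.ball u ρ := by
    intro z hz
    set w : (F '' C) := (⟨z, hz.2⟩ : (F '' C)) with hw
    have hval : ((e ⟨u, hu⟩ : (F '' C)) : EuclideanSpace ℝ (Fin m)) = F u := he ⟨u, hu⟩
    have hd : dist w (e ⟨u, hu⟩) < R := by
      rw [Subtype.dist_eq, hval]
      exact Metric.mem_ball.mp hz.1
    have hclose := hR hd
    have hsymm : ((e.symm (e ⟨u, hu⟩) : C) : EuclideanSpace ℝ (Fin n)) = u := by
      rw [e.symm_apply_apply]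
    rw [hsymm] at hclose
    refine ⟨(e.symm w : C), (e.symm w).2, ?_, Metric.mem_ball.mpr hclose⟩
    have h1 := he (e.symm w)
    rw [e.apply_symm_apply] at h1
    exact h1.symm
  obtain ⟨a, haC, haF, haρ⟩ := key x hx
  obtain ⟨b, hbC, hbF, hbρ⟩ := key x' hx'
  set l : ℝ := ‖x' - x‖ with hldef
  have hl0 : 0 < l := norm_pos_iff.mpr (sub_ne_zero.mpr (Ne.symm hxx'))
  have hab : a ≠ b := by
    intro h
    exact hxx' (by rw [← haF, ← hbF, h])
  have habn : 0 < ‖b - a‖ := norm_pos_iff.mpr (sub_ne_zero.mpr (Ne.symm hab))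
  -- lower bound on l
  have hxx : x' - x = F b - F a := by rw [haF, hbF]
  have hlFb : l = ‖F b - F a‖ := by rw [hldef, hxx]
  have hABl : ‖A (b - a)‖ ≤ l + δ * ‖b - a‖ := by
    have h1 := mvt a haρ b hbρ
    have h2 : ‖A (b - a)‖ ≤ ‖F b - F a‖ + ‖F b - F a - A (b - a)‖ := by
      have := norm_sub_le (F b - F a) (F b - F a - A (b - a))
      simpa using this
    rw [hlFb]
    linarith
  have hbal : ‖b - a‖ ≤ 2 * c * l := by
    have h3 : ‖b - a‖ ≤ c * (l + δ * ‖b - a‖) :=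
      (hanti (b - a)).trans (by nlinarith)
    have h4 : c * δ ≤ 1 / 2 := by
      have h := hδ1
      rw [le_div_iff₀ (by positivity : (0:ℝ) < 2 * c)] at h
      nlinarith
    nlinarith
  set v : EuclideanSpace ℝ (Fin m) := l⁻¹ • (x' - x) with hvdef
  set f : ℝ → EuclideanSpace ℝ (Fin m) := fun t => F (a + (t / l) • (b - a)) with hfdef
  have hmemC : ∀ t : ℝ, 0 ≤ t → t ≤ l → a + (t / l) • (b - a) ∈ C := by
    intro t ht0 htl
    exact hC.add_smul_sub_mem haC hbC
      ⟨div_nonneg ht0 hl0.le, (div_le_one hl0).mpr htl⟩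
  have hmemρ : ∀ t : ℝ, 0 ≤ t → t ≤ l → a + (t / l) • (b - a) ∈ Metric.ball u ρ := by
    intro t ht0 htl
    exact (convex_ball u ρ).add_smul_sub_mem haρ hbρ
      ⟨div_nonneg ht0 hl0.le, (div_le_one hl0).mpr htl⟩
  refine ⟨l, hl0, f, v, ?_, ?_, ?_, ?_, ?_⟩
  · rw [hvdef, norm_smul, norm_inv, Real.norm_eq_abs, abs_of_pos hl0]
    field_simp
    exact hldef.symm
  · intro t ht
    exact ⟨a + (t / l) • (b - a), hmemC t ht.1 ht.2, rfl⟩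
  · simp [hfdef, haF]
  · have : l / l = 1 := div_self hl0.ne'
    simp [hfdef, this, hbF]
  · intro t ht0 htl
    set s : ℝ := t / l with hsdef
    have hs0 : 0 < s := div_pos ht0 hl0
    have hs1 : s ≤ 1 := (div_le_one hl0).mpr htl
    have hts : t = s * l := by rw [hsdef, div_mul_cancel₀ t hl0.ne']
    set p : EuclideanSpace ℝ (Fin n) := a + s • (b - a) with hpdef
    have hpρ : p ∈ Metric.ball u ρ := hmemρ t ht0.le htl
    have hpa : p - a = s • (b - a) := by rw [hpdef]; abel
    have h1 : ‖F p - F a - A (p - a)‖ ≤ δ * (s * ‖b - a‖) := by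
      have h := mvt a haρ p hpρ
      have h2 : ‖p - a‖ = s * ‖b - a‖ := by
        rw [hpa, norm_smul, Real.norm_eq_abs, abs_of_pos hs0]
      rwa [h2] at h
    have h2 : ‖s • (F b - F a) - A (p - a)‖ ≤ δ * (s * ‖b - a‖) := by
      have h := mvt a haρ b hbρ
      have : s • (F b - F a) - A (p - a) = s • (F b - F a - A (b - a)) := by
        rw [hpa, map_smul]
        module
      rw [this, norm_smul, Real.norm_eq_abs, abs_of_pos hs0]
      calc s * ‖F b - F a - A (b - a)‖ ≤ s * (δ * ‖b - a‖) := by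
            exact mul_le_mul_of_nonneg_left h hs0.le
        _ = δ * (s * ‖b - a‖) := by ring
    have hsplit : f t - (x + t • v) = (F p - F a - A (p - a)) - (s • (F b - F a) - A (p - a)) := by
      have htv : t • v = s • (F b - F a) := by
        rw [hvdef, hxx, smul_smul, hts]
        congr 1
        field_simp
      have hft : f t = F p := by
        show F (a + (t / l) • (b - a)) = F (a + s • (b - a))
        rfl
      rw [hft, htv, ← haF]
      abel
    have hest : ‖f t - (x + t • v)‖ ≤ 2 * δ * (s * ‖b - a‖) := by
      rw [hsplit]
      calc ‖(F p - F a - A (p - a)) - (s • (F b - F a) - A (p - a))‖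
          ≤ ‖F p - F a - A (p - a)‖ + ‖s • (F b - F a) - A (p - a)‖ := norm_sub_le _ _
        _ ≤ 2 * δ * (s * ‖b - a‖) := by linarith
    have hfin : 2 * δ * (s * ‖b - a‖) < ε * t := by
      have hδε : δ < ε / (4 * c) := by
        have : ε / (5 * c) < ε / (4 * c) := by
          apply div_lt_div_of_pos_left hε (by positivity)
          nlinarith
        exact lt_of_le_of_lt hδ2 this
      have hb2 : s * ‖b - a‖ ≤ s * (2 * c * l) :=
        mul_le_mul_of_nonneg_left hbal hs0.le
      have : 2 * δ * (s * ‖b - a‖) ≤ 2 * δ * (s * (2 * c * l)) := by nlinarith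
      have h5 : 2 * δ * (s * (2 * c * l)) = 4 * c * δ * t := by rw [hts]; ring
      have h6 : 4 * c * δ * t < ε * t := by
        apply mul_lt_mul_of_pos_right _ ht0
        have := hδε
        rw [lt_div_iff₀ (by positivity : (0:ℝ) < 4 * c)] at this
        nlinarith
      linarith
    exact lt_of_le_of_lt hest hfin
end

section
/- Let G ⊆ ℝⁿ, z ∈ G, and suppose there are a neighborhood U of z and C¹ functions g₁, …, g_m : U → ℝ such that U ∩ G = { x ∈ U : g_j(x) ≤ 0 for all j }. If there exists a vector d ∈ ℝⁿ with Dg_j(z)(d) < 0 for all j (the Mangasarian–Fromovitz condition), then G is uniformly approximable by geodesics at z: for every ε > 0 there is R > 0 such that for all distinct x, y ∈ B(z,R) ∩ G there are a curve f : [0,l] → G with f(0)=x, f(l)=y and a straight-line geodesic γ : [0,l] → ℝⁿ starting at x with ‖f(t) − γ(t)‖ < εt for all t ∈ (0,l]. -/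
set_option maxHeartbeats 2000000 in
/-- A set locally defined by `C¹` inequality constraints satisfying the
Mangasarian–Fromovitz condition at `z` is uniformly approximable by geodesics at `z`. -/
theorem mangasarian_fromovitz_UAG {n m : ℕ}
    (G : Set (EuclideanSpace ℝ (Fin n))) (z : EuclideanSpace ℝ (Fin n)) (hz : z ∈ G)
    (U : Set (EuclideanSpace ℝ (Fin n))) (hU : IsOpen U) (hzU : z ∈ U)
    (g : Fin m → EuclideanSpace ℝ (Fin n) → ℝ)
    (hg : ∀ j, ContDiffOn ℝ 1 (g j) U)
    (hUG : U ∩ G = {x ∈ U | ∀ j, g j x ≤ 0})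
    (d : EuclideanSpace ℝ (Fin n)) (hd : ∀ j, fderiv ℝ (g j) z d < 0) :
    ∀ ε > (0 : ℝ), ∃ R > (0 : ℝ),
      ∀ x ∈ Metric.ball z R ∩ G, ∀ y ∈ Metric.ball z R ∩ G, x ≠ y →
        ∃ l > (0 : ℝ), ∃ f : ℝ → EuclideanSpace ℝ (Fin n), ∃ v : EuclideanSpace ℝ (Fin n),
          ‖v‖ = 1 ∧ (∀ t ∈ Set.Icc (0 : ℝ) l, f t ∈ G) ∧ f 0 = x ∧ f l = y ∧
            ∀ t : ℝ, 0 < t → t ≤ l → ‖f t - (x + t • v)‖ < ε * t := by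
  intro ε hε
  set a : Fin m → (EuclideanSpace ℝ (Fin n) →L[ℝ] ℝ) := fun j => fderiv ℝ (g j) z with ha
  obtain ⟨c, hc, hca⟩ : ∃ c > (0:ℝ), ∀ j, a j d ≤ -c := by
    rcases isEmpty_or_nonempty (Fin m) with h | h
    · exact ⟨1, one_pos, fun j => isEmptyElim j⟩
    · refine ⟨Finset.univ.inf' Finset.univ_nonempty (fun j => -(a j d)), ?_, fun j => ?_⟩
      · rw [gt_iff_lt, Finset.lt_inf'_iff]
        exact fun j _ => by simpa using (hd j)
      · have := Finset.inf'_le (fun j => -(a j d)) (Finset.mem_univ j)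
        linarith
  set N : ℝ := ‖d‖ + 1 with hN
  have hN0 : (0:ℝ) < N := by positivity
  set μ : ℝ := min ε 1 with hμ
  have hμ0 : 0 < μ := lt_min hε one_pos
  have hμ1 : μ ≤ 1 := min_le_right _ _
  have hμε : μ ≤ ε := min_le_left _ _
  set δ : ℝ := c * μ / (8 * N) with hδdef
  have hδ : 0 < δ := by positivity
  set η : ℝ := μ / (2 * N) with hηdef
  have hη0 : 0 < η := by positivity
  have hcη : c * η = 4 * δ := by
    rw [hηdef, hδdef]; field_simp; ring
  have hdN : ‖d‖ ≤ N := by rw [hN]; linarith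
  have hδd : δ * ‖d‖ ≤ c / 2 := by
    rw [hδdef, div_mul_eq_mul_div, div_le_iff₀ (by positivity : (0:ℝ) < 8 * N)]
    nlinarith [mul_nonneg hc.le (norm_nonneg d), mul_pos hc hN0,
      mul_le_mul_of_nonneg_left hdN hc.le, hμ1, hμ0.le]
  have hηd : η * ‖d‖ < ε := by
    rw [hηdef, div_mul_eq_mul_div, div_lt_iff₀ (by positivity : (0:ℝ) < 2 * N)]
    nlinarith [mul_nonneg (sub_nonneg.mpr hμε) (norm_nonneg d), mul_pos hε hN0,
      mul_pos hε (show (0:ℝ) < N - ‖d‖ by rw [hN]; ring_nf; linarith)]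
  -- a neighborhood where the derivatives are `δ`-close to those at `z`
  have hcont : ∀ j, ContinuousAt (fun w => fderiv ℝ (g j) w) z := fun j =>
    ((hg j).continuousOn_fderiv_of_isOpen hU le_rfl).continuousAt (hU.mem_nhds hzU)
  have hev : ∀ᶠ w in nhds z, w ∈ U ∧ ∀ j, ‖fderiv ℝ (g j) w - a j‖ ≤ δ := by
    refine Filter.Eventually.and (hU.mem_nhds hzU) ?_
    rw [Filter.eventually_all]
    intro j
    have hcb : Metric.closedBall (a j) δ ∈ nhds (a j) := Metric.closedBall_mem_nhds _ hδ
    filter_upwards [hcont j hcb] with w hw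
    simpa [Metric.mem_closedBall, dist_eq_norm] using hw
  obtain ⟨ρ, hρ0, hball⟩ := Metric.eventually_nhds_iff.mp hev
  have hsub : Metric.ball z ρ ⊆ U := fun w hw => (hball (Metric.mem_ball.mp hw)).1
  -- mean value estimate
  have key : ∀ p ∈ Metric.ball z ρ, ∀ q ∈ Metric.ball z ρ, ∀ j,
      g j q ≤ g j p + a j (q - p) + δ * ‖q - p‖ := by
    intro p hp q hq j
    have hdiff : ∀ w ∈ Metric.ball z ρ,
        HasFDerivWithinAt (g j) (fderiv ℝ (g j) w) (Metric.ball z ρ) w := by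
      intro w hw
      exact (((hg j).differentiableOn one_ne_zero).differentiableAt
        (hU.mem_nhds (hsub hw))).hasFDerivAt.hasFDerivWithinAt
    have hbd : ∀ w ∈ Metric.ball z ρ, ‖fderiv ℝ (g j) w - a j‖ ≤ δ :=
      fun w hw => (hball (Metric.mem_ball.mp hw)).2 j
    have h := (convex_ball z ρ).norm_image_sub_le_of_norm_hasFDerivWithin_le' hdiff hbd hp hq
    rw [Real.norm_eq_abs] at h
    have h2 : g j q - g j p - a j (q - p) ≤ δ * ‖q - p‖ := (le_abs_self _).trans h
    linarith
  set R : ℝ := ρ / (2 * (1 + 2 * ε)) with hRdef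
  have hR0 : 0 < R := by positivity
  have hRval : R * (2 * (1 + 2 * ε)) = ρ := by
    rw [hRdef]; field_simp
  have hRρ : R < ρ := by nlinarith
  have hmemG : ∀ w ∈ Metric.ball z R ∩ G, ∀ j, g j w ≤ 0 := by
    intro w hw j
    have hwU : w ∈ U := hsub (Metric.ball_subset_ball hRρ.le hw.1)
    have hmem : w ∈ U ∩ G := ⟨hwU, hw.2⟩
    rw [hUG] at hmem
    exact hmem.2 j
  refine ⟨R, hR0, ?_⟩
  intro x hx y hy hxy
  obtain ⟨hxR, hxG⟩ := hx
  obtain ⟨hyR, hyG⟩ := hy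
  set l : ℝ := ‖y - x‖ with hldef
  have hl0 : 0 < l := by
    rw [hldef, norm_pos_iff, sub_ne_zero]
    exact hxy.symm
  set v : EuclideanSpace ℝ (Fin n) := l⁻¹ • (y - x) with hvdef
  have hvnorm : ‖v‖ = 1 := by
    rw [hvdef, norm_smul, norm_inv, Real.norm_eq_abs, abs_of_pos hl0, ← hldef,
      inv_mul_cancel₀ hl0.ne']
  have hlv : l • v = y - x := by
    rw [hvdef, smul_smul, mul_inv_cancel₀ hl0.ne', one_smul]
  set s : ℝ → ℝ := fun t => η * (t * (l - t)) / l with hsdef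
  set f : ℝ → EuclideanSpace ℝ (Fin n) := fun t => x + t • v + s t • d with hfdef
  have hf0 : f 0 = x := by simp [hfdef, hsdef]
  have hfl : f l = y := by
    have : s l = 0 := by simp [hsdef]
    simp only [hfdef, this, zero_smul, add_zero, hlv]
    abel
  have hl2R : l < 2 * R := by
    have h1 : dist y z < R := Metric.mem_ball.mp hyR
    have h2 : dist x z < R := Metric.mem_ball.mp hxR
    have h3 : dist y x ≤ dist y z + dist z x := dist_triangle y z x
    rw [dist_eq_norm] at h3
    rw [dist_comm] at h2
    rw [hldef]
    linarith
  have hsnn : ∀ t ∈ Set.Icc (0:ℝ) l, 0 ≤ s t ∧ s t ≤ η * t := by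
    intro t ht
    constructor
    · have hlt : 0 ≤ l - t := by linarith [ht.2]
      exact div_nonneg (mul_nonneg hη0.le (mul_nonneg ht.1 hlt)) hl0.le
    · show η * (t * (l - t)) / l ≤ η * t
      rw [div_le_iff₀ hl0]
      nlinarith [mul_nonneg (mul_nonneg hη0.le ht.1) ht.1]
  have hseg : ∀ t ∈ Set.Icc (0:ℝ) l, x + t • v ∈ Metric.ball z R := by
    intro t ht
    have ha1 : (0:ℝ) ≤ 1 - t / l := by
      have : t / l ≤ 1 := (div_le_one hl0).mpr ht.2
      linarith
    have ha2 : (0:ℝ) ≤ t / l := div_nonneg ht.1 hl0.le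
    have hcomb := (convex_ball z R) hxR hyR ha1 ha2 (by ring)
    have heq : x + t • v = (1 - t / l) • x + (t / l) • y := by
      rw [hvdef, smul_smul, div_eq_mul_inv]
      module
    rw [heq]
    exact hcomb
  have hfball : ∀ t ∈ Set.Icc (0:ℝ) l, f t ∈ Metric.ball z ρ := by
    intro t ht
    obtain ⟨hs0, hs1⟩ := hsnn t ht
    have h1 : ‖x + t • v - z‖ < R := by
      have := hseg t ht
      rwa [Metric.mem_ball, dist_eq_norm] at this
    have h2 : ‖s t • d‖ ≤ η * t * ‖d‖ := by
      rw [norm_smul, Real.norm_eq_abs, abs_of_nonneg hs0]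
      exact mul_le_mul_of_nonneg_right hs1 (norm_nonneg d)
    have h3 : η * t * ‖d‖ ≤ ε * t := by
      calc η * t * ‖d‖ = (η * ‖d‖) * t := by ring
      _ ≤ ε * t := mul_le_mul_of_nonneg_right hηd.le ht.1
    have h4 : ε * t ≤ ε * l := mul_le_mul_of_nonneg_left ht.2 hε.le
    have h4' : ε * l ≤ ε * (2 * R) := mul_le_mul_of_nonneg_left hl2R.le hε.le
    have heq : f t - z = (x + t • v - z) + s t • d := by
      simp only [hfdef]; abel
    have h5 : ‖f t - z‖ ≤ ‖x + t • v - z‖ + ‖s t • d‖ := by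
      rw [heq]; exact norm_add_le _ _
    rw [Metric.mem_ball, dist_eq_norm]
    nlinarith [hR0, hε]
  have hfG : ∀ t ∈ Set.Icc (0:ℝ) l, f t ∈ G := by
    intro t ht
    have hft : f t ∈ Metric.ball z ρ := hfball t ht
    have hpt : x + t • v ∈ Metric.ball z ρ := Metric.ball_subset_ball hRρ.le (hseg t ht)
    have hxρ : x ∈ Metric.ball z ρ := Metric.ball_subset_ball hRρ.le hxR
    have hyρ : y ∈ Metric.ball z ρ := Metric.ball_subset_ball hRρ.le hyR
    obtain ⟨hs0, hs1⟩ := hsnn t ht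
    have hg0 : ∀ j, g j (f t) ≤ 0 := by
      intro j
      have h1 := key x hxρ (x + t • v) hpt j
      have h2 := key y hyρ (x + t • v) hpt j
      have h3 := key (x + t • v) hpt (f t) hft j
      have e1 : (x + t • v) - x = t • v := by abel
      have e2 : (x + t • v) - y = (t - l) • v := by
        have : y = x + l • v := by rw [hlv]; abel
        rw [this]; module
      have e3 : f t - (x + t • v) = s t • d := by
        simp only [hfdef]; abel
      rw [e1] at h1
      rw [e2] at h2
      rw [e3] at h3
      simp only [map_smul, smul_eq_mul] at h1 h2 h3
      rw [norm_smul, Real.norm_eq_abs, abs_of_nonneg ht.1, hvnorm, mul_one] at h1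
      rw [norm_smul, Real.norm_eq_abs, abs_of_nonpos (by linarith [ht.2] : t - l ≤ 0), hvnorm,
        mul_one] at h2
      rw [norm_smul, Real.norm_eq_abs, abs_of_nonneg hs0] at h3
      have hgx := hmemG x ⟨hxR, hxG⟩ j
      have hgy := hmemG y ⟨hyR, hyG⟩ j
      have hlt : (0:ℝ) ≤ l - t := by linarith [ht.2]
      have e4 := mul_le_mul_of_nonneg_left h1 hlt
      have e5 := mul_le_mul_of_nonneg_left h2 ht.1
      have hgp : g j (x + t • v) * l ≤ 2 * δ * (t * (l - t)) := by
        nlinarith [e4, e5, mul_nonpos_of_nonneg_of_nonpos hlt hgx,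
          mul_nonpos_of_nonneg_of_nonpos ht.1 hgy]
      have hsB : s t * a j d ≤ s t * (-c) := mul_le_mul_of_nonneg_left (hca j) hs0
      have hsd : δ * (s t * ‖d‖) ≤ s t * (c / 2) := by
        calc δ * (s t * ‖d‖) = s t * (δ * ‖d‖) := by ring
        _ ≤ s t * (c / 2) := mul_le_mul_of_nonneg_left hδd hs0
      have hstl : s t * l = η * (t * (l - t)) := by
        show (η * (t * (l - t)) / l) * l = η * (t * (l - t))
        field_simp
      have hcsl : c * s t * l = 4 * δ * (t * (l - t)) := by
        rw [mul_assoc, hstl, ← mul_assoc, hcη]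
      have h6 : g j (f t) ≤ g j (x + t • v) - s t * c / 2 := by linarith
      have h7 : g j (f t) * l ≤ (g j (x + t • v) - s t * c / 2) * l :=
        mul_le_mul_of_nonneg_right h6 hl0.le
      have h9 : g j (f t) * l ≤ 0 := by nlinarith [h7, hgp, hcsl]
      nlinarith [h9, hl0]
    have hmem : f t ∈ U ∩ G := by
      rw [hUG]
      exact ⟨hsub hft, hg0⟩
    exact hmem.2
  refine ⟨l, hl0, f, v, hvnorm, hfG, hf0, hfl, ?_⟩
  intro t ht0 htl
  obtain ⟨hs0, hs1⟩ := hsnn t ⟨ht0.le, htl⟩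
  have e3 : f t - (x + t • v) = s t • d := by
    simp only [hfdef]; abel
  rw [e3, norm_smul, Real.norm_eq_abs, abs_of_nonneg hs0]
  calc s t * ‖d‖ ≤ η * t * ‖d‖ := mul_le_mul_of_nonneg_right hs1 (norm_nonneg d)
  _ = (η * ‖d‖) * t := by ring
  _ < ε * t := mul_lt_mul_of_pos_right hηd ht0
end

section
/- Define g : [0, 1/2] → ℝ by g(0) = 0 and, for t ∈ (1/2^{n+1}, 1/2ⁿ] with n ≥ 1, g(t) = (1/2ⁿ)(t − 1/2^{n+1}) if t ∈ (1/2^{n+1}, 3/2^{n+2}] and g(t) = (1/2ⁿ)(1/2ⁿ − t) if t ∈ (3/2^{n+2}, 1/2ⁿ]. Let A = { (t, g(t)) : 0 ≤ t ≤ 1/2 } ⊆ ℝ². Then A is uniformly approximable by geodesics at (0,0): for every ε > 0 there exists R > 0 such that for any distinct x, x' ∈ B((0,0), R) ∩ A there exist a curve f : [0,l] → A from x to x' and a unit-speed straight-line geodesic γ : [0,l] → ℝ² starting at x with ‖γ(t) − f(t)‖ < εt for all t ∈ (0,l]. -/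
section tentAux

variable (g : ℝ → ℝ)

lemma tentA
    (hg1 : ∀ n : ℕ, 1 ≤ n → ∀ t : ℝ, 1 / 2 ^ (n + 1) < t → t ≤ 3 / 2 ^ (n + 2) →
      g t = 1 / 2 ^ n * (t - 1 / 2 ^ (n + 1)))
    (hg2 : ∀ n : ℕ, 1 ≤ n → ∀ t : ℝ, 3 / 2 ^ (n + 2) < t → t ≤ 1 / 2 ^ n →
      g t = 1 / 2 ^ n * (1 / 2 ^ n - t)) :
    ∀ n : ℕ, 1 ≤ n → ∀ t : ℝ, 1 / 2 ^ (n + 1) ≤ t → t ≤ 3 / 2 ^ (n + 2) →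
      g t = 1 / 2 ^ n * (t - 1 / 2 ^ (n + 1)) := by
  intro n hn t ht1 ht2
  rcases eq_or_lt_of_le ht1 with h | h
  · have hpos : (0:ℝ) < 2 ^ n := by positivity
    have hlt : 3 / (2:ℝ) ^ (n + 1 + 2) < t := by
      rw [← h, show n+1+2 = n+3 from rfl, show (2:ℝ)^(n+3) = 8*2^n by ring,
        show (2:ℝ)^(n+1) = 2*2^n by ring, div_lt_div_iff₀ (by positivity) (by positivity)]
      nlinarith
    have hle : t ≤ 1 / (2:ℝ) ^ (n + 1) := by rw [← h]
    have h2 := hg2 (n+1) (by omega) t hlt hle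
    rw [h2, ← h]
    ring
  · exact hg1 n hn t h ht2

/-- Lipschitz bound on a single piece. -/
lemma tentP
    (hg1 : ∀ n : ℕ, 1 ≤ n → ∀ t : ℝ, 1 / 2 ^ (n + 1) < t → t ≤ 3 / 2 ^ (n + 2) →
      g t = 1 / 2 ^ n * (t - 1 / 2 ^ (n + 1)))
    (hg2 : ∀ n : ℕ, 1 ≤ n → ∀ t : ℝ, 3 / 2 ^ (n + 2) < t → t ≤ 1 / 2 ^ n →
      g t = 1 / 2 ^ n * (1 / 2 ^ n - t)) :
    ∀ n : ℕ, 1 ≤ n → ∀ s' s : ℝ, 1 / 2 ^ (n + 1) ≤ s' → s' ≤ s → s ≤ 1 / 2 ^ n →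
      |g s - g s'| ≤ 1 / 2 ^ n * (s - s') := by
  intro n hn s' s h1 h2 h3
  have hpos : (0:ℝ) < 2 ^ n := by positivity
  have hA := tentA g hg1 hg2 n hn
  set k : ℝ := 1 / 2 ^ n with hk
  have hk0 : 0 < k := by positivity
  have hE1 : (1:ℝ) / 2 ^ (n+1) = k / 2 := by rw [hk, pow_succ]; ring
  have hE2 : (3:ℝ) / 2 ^ (n+2) = 3 * k / 4 := by
    rw [hk, show (2:ℝ)^(n+2) = 2^n * 4 by ring]; ring
  rw [hE1] at h1
  rcases le_or_gt s (3 / 2 ^ (n+2)) with hs | hs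
  · rw [hA s' (by rw [hE1]; exact h1) (h2.trans hs), hA s (by rw [hE1]; linarith) hs, hE1]
    have : k * (s - k / 2) - k * (s' - k / 2) = k * (s - s') := by ring
    rw [this, abs_of_nonneg (mul_nonneg hk0.le (by linarith))]
  · rcases le_or_gt s' (3 / 2 ^ (n+2)) with hs' | hs'
    · rw [hA s' (by rw [hE1]; exact h1) hs', hg2 n hn s hs h3, hE1]
      rw [hE2] at hs hs'
      rw [abs_le]
      constructor
      · nlinarith [mul_nonneg hk0.le (show (0:ℝ) ≤ 3*k/4 - s' by linarith)]
      · nlinarith [mul_nonneg hk0.le (show (0:ℝ) ≤ s - 3*k/4 by linarith)]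
    · rw [hg2 n hn s' hs' (h2.trans h3), hg2 n hn s hs h3]
      have : k * (k - s) - k * (k - s') = -(k * (s - s')) := by ring
      rw [this, abs_neg, abs_of_nonneg (mul_nonneg hk0.le (by linarith))]

/-- global Lipschitz-type bound, from dyadic level n up -/
lemma tentG
    (hg1 : ∀ n : ℕ, 1 ≤ n → ∀ t : ℝ, 1 / 2 ^ (n + 1) < t → t ≤ 3 / 2 ^ (n + 2) →
      g t = 1 / 2 ^ n * (t - 1 / 2 ^ (n + 1)))
    (hg2 : ∀ n : ℕ, 1 ≤ n → ∀ t : ℝ, 3 / 2 ^ (n + 2) < t → t ≤ 1 / 2 ^ n →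
      g t = 1 / 2 ^ n * (1 / 2 ^ n - t)) :
    ∀ n : ℕ, ∀ s' s : ℝ, 1 / 2 ^ (n + 1) ≤ s' → s' ≤ s → s ≤ 1 / 2 →
      |g s - g s'| ≤ 2 * s * (s - s') := by
  intro n
  induction n with
  | zero =>
    intro s' s h1 h2 h3
    have : s' = s := le_antisymm h2 (h3.trans (by norm_num at h1 ⊢; linarith))
    simp [this]
  | succ n IH =>
    intro s' s h1 h2 h3
    set d : ℝ := 1 / 2 ^ (n+1) with hd
    have hd0 : 0 < d := by positivity
    have hE : (1:ℝ) / 2 ^ (n+1+1) = d / 2 := by rw [hd, pow_succ]; ring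
    rw [hE] at h1
    rcases le_total d s' with h | h
    · exact IH s' s h h2 h3
    · have hds : d ≤ 2 * s := by linarith
      rcases le_total s d with h4 | h4
      · have hP := tentP g hg1 hg2 (n+1) (by omega) s' s (by rw [hE]; exact h1) h2 h4
        rw [← hd] at hP
        calc |g s - g s'| ≤ d * (s - s') := hP
          _ ≤ 2 * s * (s - s') := mul_le_mul_of_nonneg_right (by linarith) (by linarith)
      · have hIH := IH d s le_rfl h4 h3
        have hP := tentP g hg1 hg2 (n+1) (by omega) s' d (by rw [hE]; exact h1) h le_rfl
        rw [← hd] at hP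
        have tri : |g s - g s'| ≤ |g s - g d| + |g d - g s'| := by
          calc |g s - g s'| = |(g s - g d) + (g d - g s')| := by ring_nf
            _ ≤ _ := abs_add_le _ _
        have h5 : d * (d - s') ≤ 2 * s * (d - s') :=
          mul_le_mul_of_nonneg_right (by linarith) (by linarith)
        nlinarith [tri, hIH, hP]

lemma tent_exists_level (s : ℝ) (hs : 0 < s) : ∃ n : ℕ, (1:ℝ) / 2 ^ (n+1) < s := by
  obtain ⟨n, hn⟩ := exists_pow_lt_of_lt_one hs (by norm_num : (1:ℝ)/2 < 1)
  refine ⟨n, lt_of_le_of_lt ?_ hn⟩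
  rw [div_pow, one_pow] at hn ⊢
  gcongr <;> norm_num

/-- size bound -/
lemma tentB (hg0 : g 0 = 0)
    (hg1 : ∀ n : ℕ, 1 ≤ n → ∀ t : ℝ, 1 / 2 ^ (n + 1) < t → t ≤ 3 / 2 ^ (n + 2) →
      g t = 1 / 2 ^ n * (t - 1 / 2 ^ (n + 1)))
    (hg2 : ∀ n : ℕ, 1 ≤ n → ∀ t : ℝ, 3 / 2 ^ (n + 2) < t → t ≤ 1 / 2 ^ n →
      g t = 1 / 2 ^ n * (1 / 2 ^ n - t)) :
    ∀ s : ℝ, 0 ≤ s → s ≤ 1 / 2 → 0 ≤ g s ∧ g s ≤ s ^ 2 := by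
  intro s hs0 hs
  rcases eq_or_lt_of_le hs0 with h | h
  · simp [← h, hg0]
  have hex : ∃ n : ℕ, (1:ℝ) / 2 ^ (n+1) < s := tent_exists_level s h
  classical
  set n := Nat.find hex with hn
  have hn1 : (1:ℝ) / 2 ^ (n+1) < s := Nat.find_spec hex
  have hnpos : 1 ≤ n := by
    by_contra hc
    push_neg at hc
    interval_cases n
    · norm_num at hn1; linarith
  have hn2 : s ≤ (1:ℝ) / 2 ^ n := by
    have := Nat.find_min hex (m := n - 1) (by omega)
    push_neg at this
    have e : n - 1 + 1 = n := by omega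
    rwa [e] at this
  have hpos : (0:ℝ) < 2 ^ n := by positivity
  set k : ℝ := 1 / 2 ^ n with hk
  have hk0 : 0 < k := by positivity
  have hE1 : (1:ℝ) / 2 ^ (n+1) = k / 2 := by rw [hk, pow_succ]; ring
  have hE2 : (3:ℝ) / 2 ^ (n+2) = 3 * k / 4 := by
    rw [hk, show (2:ℝ)^(n+2) = 2^n * 4 by ring]; ring
  rw [hE1] at hn1
  rcases le_or_gt s (3 / 2 ^ (n+2)) with hcase | hcase
  · rw [tentA g hg1 hg2 n hnpos s (by rw [hE1]; exact hn1.le) hcase, hE1]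
    rw [hE2] at hcase
    constructor
    · exact mul_nonneg hk0.le (by linarith)
    · nlinarith [sq_nonneg (s - k/2), sq_nonneg s]
  · rw [hg2 n hnpos s hcase hn2]
    rw [hE2] at hcase
    constructor
    · exact mul_nonneg hk0.le (by linarith)
    · nlinarith [sq_nonneg (s - k/2)]

/-- full symmetric Lipschitz bound -/
lemma tentL (hg0 : g 0 = 0)
    (hg1 : ∀ n : ℕ, 1 ≤ n → ∀ t : ℝ, 1 / 2 ^ (n + 1) < t → t ≤ 3 / 2 ^ (n + 2) →
      g t = 1 / 2 ^ n * (t - 1 / 2 ^ (n + 1)))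
    (hg2 : ∀ n : ℕ, 1 ≤ n → ∀ t : ℝ, 3 / 2 ^ (n + 2) < t → t ≤ 1 / 2 ^ n →
      g t = 1 / 2 ^ n * (1 / 2 ^ n - t)) :
    ∀ s' s : ℝ, 0 ≤ s' → s' ≤ s → s ≤ 1 / 2 →
      |g s - g s'| ≤ 2 * s * (s - s') := by
  intro s' s h1 h2 h3
  rcases eq_or_lt_of_le h1 with h | h
  · rw [← h, hg0, sub_zero, sub_zero]
    rcases eq_or_lt_of_le (h.le.trans h2) with h' | h'
    · simp [← h', hg0]
    · obtain ⟨hB0, hB1⟩ := tentB g hg0 hg1 hg2 s h'.le h3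
      rw [abs_of_nonneg hB0]
      nlinarith
  · obtain ⟨m, hm⟩ := tent_exists_level s' h
    exact tentG g hg1 hg2 m s' s hm.le h2 h3

end tentAux

lemma tent_fst_le_norm (a b : ℝ) : |a| ≤ ‖(WithLp.equiv 2 (ℝ × ℝ)).symm (a, b)‖ := by
  rw [WithLp.prod_norm_eq_of_L2]
  simp only [WithLp.equiv_symm_apply, WithLp.toLp_fst, WithLp.toLp_snd, Real.norm_eq_abs]
  rw [Real.le_sqrt (abs_nonneg a)]
  · nlinarith [sq_nonneg |b|, sq_abs a]
  · positivity

lemma tent_ball_coord {R a b : ℝ}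
    (h : (WithLp.equiv 2 (ℝ × ℝ)).symm (a, b) ∈
      Metric.ball ((WithLp.equiv 2 (ℝ × ℝ)).symm ((0:ℝ), (0:ℝ))) R) : |a| < R := by
  rw [Metric.mem_ball, dist_eq_norm, WithLp.equiv_symm_apply, ← WithLp.toLp_sub, Prod.mk_sub_mk, sub_zero,
    sub_zero] at h
  exact lt_of_le_of_lt (tent_fst_le_norm a b) h



/-- The graph of the tent-like function `g` over `[0,1/2]` is uniformly approximable
by geodesics at the origin of `ℝ²` (with the Euclidean, i.e. ℓ², metric). -/
theorem tent_graph_UAG (g : ℝ → ℝ) (hg0 : g 0 = 0)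
    (hg1 : ∀ n : ℕ, 1 ≤ n → ∀ t : ℝ, 1 / 2 ^ (n + 1) < t → t ≤ 3 / 2 ^ (n + 2) →
      g t = 1 / 2 ^ n * (t - 1 / 2 ^ (n + 1)))
    (hg2 : ∀ n : ℕ, 1 ≤ n → ∀ t : ℝ, 3 / 2 ^ (n + 2) < t → t ≤ 1 / 2 ^ n →
      g t = 1 / 2 ^ n * (1 / 2 ^ n - t)) :
    ∀ ε > (0 : ℝ), ∃ R > (0 : ℝ),
      ∀ x ∈ Metric.ball ((WithLp.equiv 2 (ℝ × ℝ)).symm (0, 0)) R ∩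
          {p : WithLp 2 (ℝ × ℝ) | ∃ t ∈ Set.Icc (0 : ℝ) (1 / 2),
            p = (WithLp.equiv 2 (ℝ × ℝ)).symm (t, g t)},
        ∀ x' ∈ Metric.ball ((WithLp.equiv 2 (ℝ × ℝ)).symm (0, 0)) R ∩
            {p : WithLp 2 (ℝ × ℝ) | ∃ t ∈ Set.Icc (0 : ℝ) (1 / 2),
              p = (WithLp.equiv 2 (ℝ × ℝ)).symm (t, g t)},
          x ≠ x' →
            ∃ l > (0 : ℝ), ∃ f : ℝ → WithLp 2 (ℝ × ℝ), ∃ v : WithLp 2 (ℝ × ℝ),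
              ‖v‖ = 1 ∧
              (∀ t ∈ Set.Icc (0 : ℝ) l, ∃ s ∈ Set.Icc (0 : ℝ) (1 / 2),
                f t = (WithLp.equiv 2 (ℝ × ℝ)).symm (s, g s)) ∧
              f 0 = x ∧ f l = x' ∧
              ∀ t : ℝ, 0 < t → t ≤ l → ‖(x + t • v) - f t‖ < ε * t := by
  
  intro ε hε
  refine ⟨ε / 2, by positivity, ?_⟩
  rintro x ⟨hxb, a, haI, rfl⟩ x' ⟨hx'b, b, hbI, rfl⟩ hne
  obtain ⟨ha0, ha12⟩ := haI
  obtain ⟨hb0, hb12⟩ := hbI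
  have haR : a < ε / 2 := (le_abs_self a).trans_lt (tent_ball_coord hxb)
  have hbR : b < ε / 2 := (le_abs_self b).trans_lt (tent_ball_coord hx'b)
  have hab : a ≠ b := by
    rintro rfl; exact hne rfl
  set l : ℝ := |b - a| with hl
  have hl0 : 0 < l := abs_pos.mpr (sub_ne_zero.mpr (Ne.symm hab))
  obtain ⟨e, he1, heb, hrange⟩ :
      ∃ e : ℝ, |e| = 1 ∧ a + l * e = b ∧
        ∀ t : ℝ, 0 ≤ t → t ≤ l → min a b ≤ a + t * e ∧ a + t * e ≤ max a b := by
    rcases lt_or_gt_of_ne hab with h | h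
    · have hle : l = b - a := abs_of_pos (by linarith)
      refine ⟨1, by norm_num, by rw [hle]; ring, fun t ht0 htl => ?_⟩
      constructor
      · have : min a b = a := min_eq_left h.le
        rw [this]; linarith
      · have : max a b = b := max_eq_right h.le
        rw [this]; rw [hle] at htl; linarith
    · have hle : l = a - b := by rw [hl, abs_of_neg (by linarith)]; ring
      refine ⟨-1, by norm_num, by rw [hle]; ring, fun t ht0 htl => ?_⟩
      constructor
      · have : min a b = b := min_eq_right h.le
        rw [this]; rw [hle] at htl; linarith
      · have : max a b = a := max_eq_left h.le
        rw [this]; linarith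
  have hmin0 : (0:ℝ) ≤ min a b := le_min ha0 hb0
  have hmax12 : max a b ≤ 1 / 2 := max_le ha12 hb12
  have hmaxR : max a b < ε / 2 := max_lt haR hbR
  refine ⟨l, hl0, fun t => (WithLp.equiv 2 (ℝ × ℝ)).symm (a + t * e, g (a + t * e)),
    (WithLp.equiv 2 (ℝ × ℝ)).symm (e, 0), ?_, ?_, ?_, ?_, ?_⟩
  · rw [WithLp.equiv_symm_apply, WithLp.norm_toLp_fst, Real.norm_eq_abs, he1]
  · rintro t ⟨ht0, htl⟩
    obtain ⟨hs1, hs2⟩ := hrange t ht0 htl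
    exact ⟨a + t * e, ⟨hmin0.trans hs1, hs2.trans hmax12⟩, rfl⟩
  · norm_num
  · show (WithLp.equiv 2 (ℝ × ℝ)).symm (a + l * e, g (a + l * e)) =
        (WithLp.equiv 2 (ℝ × ℝ)).symm (b, g b)
    rw [heb]
  · intro t ht0 htl
    obtain ⟨hs1, hs2⟩ := hrange t ht0.le htl
    set s : ℝ := a + t * e with hs
    have hs0 : 0 ≤ s := hmin0.trans hs1
    have hs12 : s ≤ 1 / 2 := hs2.trans hmax12
    have hsR : s < ε / 2 := lt_of_le_of_lt hs2 hmaxR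
    have hkey : (WithLp.equiv 2 (ℝ × ℝ)).symm (a, g a) +
        t • (WithLp.equiv 2 (ℝ × ℝ)).symm (e, 0) -
        (WithLp.equiv 2 (ℝ × ℝ)).symm (s, g s) =
        (WithLp.equiv 2 (ℝ × ℝ)).symm (0, g a - g s) := by
      rw [WithLp.equiv_symm_apply, ← WithLp.toLp_smul, ← WithLp.toLp_add, ← WithLp.toLp_sub]
      congr 1
      rw [Prod.smul_mk, Prod.mk_add_mk, Prod.mk_sub_mk]
      refine Prod.ext ?_ ?_
      · show a + t • e - s = 0
        rw [hs, smul_eq_mul]; ring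
      · show g a + t • (0:ℝ) - g s = g a - g s
        rw [smul_zero]; ring
    rw [hkey, WithLp.equiv_symm_apply, WithLp.norm_toLp_snd, Real.norm_eq_abs]
    have habs : |s - a| = t := by
      rw [hs, add_sub_cancel_left, abs_mul, he1, mul_one, abs_of_nonneg ht0.le]
    rcases le_total a s with hcase | hcase
    · have hL := tentL g hg0 hg1 hg2 a s ha0 hcase hs12
      have : s - a = t := by rw [← habs, abs_of_nonneg (by linarith)]
      rw [abs_sub_comm]
      rw [this] at hL
      calc |g s - g a| ≤ 2 * s * t := hL
        _ < ε * t := by nlinarith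
    · have hL := tentL g hg0 hg1 hg2 s a hs0 hcase ha12
      have : a - s = t := by rw [← habs, abs_sub_comm, abs_of_nonneg (by linarith)]
      rw [this] at hL
      calc |g a - g s| ≤ 2 * a * t := hL
        _ < ε * t := by nlinarith
end

section
/- Let h : [0, l] → ℝ be a C-convex function (i.e., t ↦ h(t) + Ct² is convex) with h(0) = h(l) = 0 and h ≥ 0. Then h(t) ≤ 2lCt for all t ∈ [0,l]. (In particular, if l ≤ 2R, then h(t) ≤ 4RCt.) -/
/-- A nonnegative `C`-convex function on `[0,l]` vanishing at the endpoints satisfies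
`h(t) ≤ 2lCt`; in particular, if `l ≤ 2R` then `h(t) ≤ 4RCt`. -/
theorem lambda_convex_linear_bound (l C : ℝ) (hl : 0 < l) (hC : 0 ≤ C) (h : ℝ → ℝ)
    (hconv : ConvexOn ℝ (Set.Icc 0 l) (fun t => h t + C * t ^ 2))
    (h0 : h 0 = 0) (hL : h l = 0) (hpos : ∀ t ∈ Set.Icc (0 : ℝ) l, 0 ≤ h t) :
    (∀ t ∈ Set.Icc (0 : ℝ) l, h t ≤ 2 * l * C * t) ∧
    ∀ R : ℝ, l ≤ 2 * R → ∀ t ∈ Set.Icc (0 : ℝ) l, h t ≤ 4 * R * C * t := by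
  have key : ∀ t ∈ Set.Icc (0 : ℝ) l, h t ≤ 2 * l * C * t := by
    intro t ht
    obtain ⟨ht0, htl⟩ := ht
    have ha : (0:ℝ) ≤ 1 - t / l := by
      have : t / l ≤ 1 := by
        rw [div_le_one hl]; exact htl
      linarith
    have hb : (0:ℝ) ≤ t / l := div_nonneg ht0 hl.le
    have hab : (1 - t / l) + t / l = 1 := by ring
    have hmem0 : (0:ℝ) ∈ Set.Icc (0:ℝ) l := by simp [hl.le]
    have hmeml : l ∈ Set.Icc (0:ℝ) l := by simp [hl.le]
    have hcv := hconv.2 hmem0 hmeml ha hb hab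
    simp only [smul_eq_mul, mul_zero, zero_add, h0, hL] at hcv
    have hteq : (t / l) * l = t := div_mul_cancel₀ t hl.ne'
    rw [hteq] at hcv
    -- hcv : h t + C * t ^ 2 ≤ (1 - t/l) * (0 + C*0^2) + (t/l) * (0 + C * l^2)
    have hct2 : 0 ≤ C * t ^ 2 := mul_nonneg hC (sq_nonneg t)
    have : h t + C * t ^ 2 ≤ (t / l) * (C * l ^ 2) := by nlinarith [hcv]
    have h2 : (t / l) * (C * l ^ 2) = C * l * t := by
      field_simp
    nlinarith [mul_nonneg (mul_nonneg hC hl.le) ht0]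
  refine ⟨key, fun R hR t ht => ?_⟩
  have := key t ht
  obtain ⟨ht0, _⟩ := ht
  nlinarith [mul_nonneg hC ht0]
end

section
/- Let a, b be unit vectors in ℝ^{n+1} with 0 < |⟨a,b⟩| < √3/2, A = { x ∈ 𝕊ⁿ : ⟨x,a⟩ = 1/2 }, and B = { x ∈ 𝕊ⁿ : ⟨x,b⟩ = 0 }. Then A ∩ B is nonempty. -/
open scoped RealInnerProductSpace

set_option maxHeartbeats 1600000 in
/-- The small circle `{x ∈ 𝕊ⁿ : ⟨x,a⟩ = 1/2}` and the great subsphere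
`{x ∈ 𝕊ⁿ : ⟨x,b⟩ = 0}` intersect whenever `0 < |⟨a,b⟩| < √3/2` (and `n ≥ 2`). -/
theorem small_circle_meets_great_sphere {n : ℕ} (hn : 2 ≤ n)
    (a b : EuclideanSpace ℝ (Fin (n + 1))) (ha : ‖a‖ = 1) (hb : ‖b‖ = 1)
    (h1 : 0 < |⟪a, b⟫|) (h2 : |⟪a, b⟫| < Real.sqrt 3 / 2) :
    ∃ x : EuclideanSpace ℝ (Fin (n + 1)), ‖x‖ = 1 ∧ ⟪x, a⟫ = 1 / 2 ∧ ⟪x, b⟫ = 0 := by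
  classical
  -- find a unit vector orthogonal to a and b
  set S : Submodule ℝ (EuclideanSpace ℝ (Fin (n + 1))) := Submodule.span ℝ {a, b} with hS
  have hdim : Module.finrank ℝ S ≤ 2 := by
    have h := finrank_span_le_card (R := ℝ) ({a, b} : Set (EuclideanSpace ℝ (Fin (n+1))))
    refine h.trans ?_
    have : ({a, b} : Set (EuclideanSpace ℝ (Fin (n+1)))).toFinset ⊆ {a, b} := by
      intro x hx; simpa using Set.mem_toFinset.mp hx
    calc ({a, b} : Set (EuclideanSpace ℝ (Fin (n+1)))).toFinset.card
        ≤ ({a, b} : Finset (EuclideanSpace ℝ (Fin (n+1)))).card := Finset.card_le_card this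
      _ ≤ 2 := Finset.card_insert_le _ _ |>.trans (by simp)
  have hne : Sᗮ ≠ ⊥ := by
    intro h
    have hStop : S = ⊤ := Submodule.orthogonal_eq_bot_iff.mp h
    have : Module.finrank ℝ (EuclideanSpace ℝ (Fin (n+1))) ≤ 2 := by
      rw [← finrank_top ℝ (EuclideanSpace ℝ (Fin (n+1))), ← hStop]; exact hdim
    simp [finrank_euclideanSpace] at this
    omega
  obtain ⟨c, hcS, hc0⟩ := Submodule.exists_mem_ne_zero_of_ne_bot hne
  have hcn : ‖c‖ ≠ 0 := norm_ne_zero_iff.mpr hc0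
  set u : EuclideanSpace ℝ (Fin (n+1)) := ‖c‖⁻¹ • c with hu
  have hua : ⟪u, a⟫ = 0 := by
    rw [hu, real_inner_smul_left]
    have : ⟪c, a⟫ = 0 := by
      have := hcS a (Submodule.subset_span (by simp))
      rwa [real_inner_comm] at this
    simp [this]
  have hub : ⟪u, b⟫ = 0 := by
    rw [hu, real_inner_smul_left]
    have : ⟪c, b⟫ = 0 := by
      have := hcS b (Submodule.subset_span (by simp))
      rwa [real_inner_comm] at this
    simp [this]
  have huu : ⟪u, u⟫ = 1 := by
    rw [real_inner_self_eq_norm_sq, hu, norm_smul]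
    rw [norm_inv, norm_norm]
    field_simp
  set t : ℝ := ⟪a, b⟫ with htdef
  have haa : ⟪a, a⟫ = 1 := by rw [real_inner_self_eq_norm_sq, ha]; norm_num
  have hbb : ⟪b, b⟫ = 1 := by rw [real_inner_self_eq_norm_sq, hb]; norm_num
  have hba : ⟪b, a⟫ = t := (real_inner_comm b a).symm
  have ht2 : t ^ 2 < 3 / 4 := by
    have h3 : (Real.sqrt 3 / 2) ^ 2 = 3 / 4 := by
      rw [div_pow, Real.sq_sqrt (by norm_num : (3:ℝ) ≥ 0)]; norm_num
    have ht : t ^ 2 = |t| ^ 2 := (sq_abs t).symm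
    nlinarith [abs_nonneg t]
  have hs : (0:ℝ) < 1 - t ^ 2 := by nlinarith
  have hγ2 : (0:ℝ) ≤ 1 - 1 / (4 * (1 - t ^ 2)) := by
    rw [sub_nonneg, div_le_one (by linarith)]
    nlinarith
  set γ : ℝ := Real.sqrt (1 - 1 / (4 * (1 - t ^ 2))) with hγ
  have hγsq : γ * γ = 1 - 1 / (4 * (1 - t ^ 2)) := by
    rw [← pow_two, hγ, Real.sq_sqrt hγ2]
  refine ⟨(1 / (2 * (1 - t ^ 2))) • a + (-(1 / (2 * (1 - t ^ 2))) * t) • b + γ • u, ?_, ?_, ?_⟩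
  · have hxx : ⟪(1 / (2 * (1 - t ^ 2))) • a + (-(1 / (2 * (1 - t ^ 2))) * t) • b + γ • u,
        (1 / (2 * (1 - t ^ 2))) • a + (-(1 / (2 * (1 - t ^ 2))) * t) • b + γ • u⟫ = 1 := by
      simp only [inner_add_left, inner_add_right, real_inner_smul_left, real_inner_smul_right,
        haa, hbb, hba, huu, hua, hub, ← htdef, real_inner_comm u a, real_inner_comm u b,
        mul_zero, mul_one, add_zero, zero_add]
      have h4 : (4 : ℝ) * (1 - t ^ 2) ≠ 0 := by positivity
      have hgg4 : γ * γ * (4 * (1 - t ^ 2)) = 4 * (1 - t ^ 2) - 1 := by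
        rw [hγsq]; field_simp
      field_simp
      linear_combination (1 - t ^ 2) * hgg4
    have hn2 := real_inner_self_eq_norm_sq ((1 / (2 * (1 - t ^ 2))) • a +
      (-(1 / (2 * (1 - t ^ 2))) * t) • b + γ • u)
    rw [hxx] at hn2
    have hnn := norm_nonneg ((1 / (2 * (1 - t ^ 2))) • a +
      (-(1 / (2 * (1 - t ^ 2))) * t) • b + γ • u)
    nlinarith
  · simp only [inner_add_left, real_inner_smul_left, haa, hba, hua, ← htdef,
      mul_zero, mul_one, add_zero]
    field_simp
    ring
  · simp only [inner_add_left, real_inner_smul_left, hbb, hub, ← htdef,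
      mul_zero, mul_one, add_zero]
    field_simp
    ring
end

section
/- Let a be a unit vector in ℝ^{n+1}, A = { y ∈ 𝕊ⁿ : ⟨y,a⟩ = 1/2 }, and let x ∈ 𝕊ⁿ with x ≠ ±a. Then the point x'' = (√3/2)·(x − ⟨a,x⟩a)/‖x − ⟨a,x⟩a‖ + (1/2)a belongs to A and is a nearest point of x in A with respect to the spherical distance d(p,q) = arccos⟨p,q⟩. -/
open scoped RealInnerProductSpace

lemma arccos_antitone {s u : ℝ} (h : s ≤ u) : Real.arccos u ≤ Real.arccos s := by
  simp only [Real.arccos]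
  linarith [Real.monotone_arcsin h]

set_option maxHeartbeats 1000000 in
/-- For a unit vector `x ≠ ±a`, the point
`x'' = (√3/2)·(x − ⟨a,x⟩a)/‖x − ⟨a,x⟩a‖ + (1/2)a` lies in
`A = {y ∈ 𝕊ⁿ : ⟨y,a⟩ = 1/2}` and is a nearest point of `x` in `A` for the
spherical distance `d(p,q) = arccos⟨p,q⟩`. -/
theorem projection_onto_small_circle {n : ℕ} (a x : EuclideanSpace ℝ (Fin (n + 1)))
    (ha : ‖a‖ = 1) (hx : ‖x‖ = 1) (hx1 : x ≠ a) (hx2 : x ≠ -a) :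
    ‖((Real.sqrt 3 / 2) • (‖x - ⟪a, x⟫ • a‖⁻¹ • (x - ⟪a, x⟫ • a)) + (1 / 2 : ℝ) • a :
        EuclideanSpace ℝ (Fin (n + 1)))‖ = 1 ∧
    ⟪(Real.sqrt 3 / 2) • (‖x - ⟪a, x⟫ • a‖⁻¹ • (x - ⟪a, x⟫ • a)) + (1 / 2 : ℝ) • a, a⟫
      = 1 / 2 ∧
    ∀ w : EuclideanSpace ℝ (Fin (n + 1)), ‖w‖ = 1 → ⟪w, a⟫ = 1 / 2 →
      Real.arccos ⟪x, (Real.sqrt 3 / 2) • (‖x - ⟪a, x⟫ • a‖⁻¹ • (x - ⟪a, x⟫ • a)) +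
          (1 / 2 : ℝ) • a⟫ ≤ Real.arccos ⟪x, w⟫ := by
  set t : ℝ := ⟪a, x⟫ with ht
  set v : EuclideanSpace ℝ (Fin (n + 1)) := x - t • a with hvdef
  have haa : ⟪a, a⟫ = (1 : ℝ) := by
    rw [real_inner_self_eq_norm_sq, ha]; norm_num
  have hxx : ⟪x, x⟫ = (1 : ℝ) := by
    rw [real_inner_self_eq_norm_sq, hx]; norm_num
  have hxa : ⟪x, a⟫ = t := real_inner_comm a x
  have ht1 : t ≠ 1 := by
    intro h
    apply hx1
    have : ‖x - a‖ ^ 2 = 0 := by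
      rw [norm_sub_sq_real, hx, ha, hxa, h]; ring
    have := pow_eq_zero_iff (n := 2) (by norm_num) |>.mp this
    rwa [norm_eq_zero, sub_eq_zero] at this
  have ht2 : t ≠ -1 := by
    intro h
    apply hx2
    have : ‖x + a‖ ^ 2 = 0 := by
      rw [norm_add_sq_real, hx, ha, hxa, h]; ring
    have := pow_eq_zero_iff (n := 2) (by norm_num) |>.mp this
    rw [norm_eq_zero] at this
    exact eq_neg_of_add_eq_zero_left this
  have htabs : |t| ≤ 1 := by
    have := abs_real_inner_le_norm a x
    rwa [ha, hx, one_mul] at this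
  have ht2' : t ^ 2 < 1 := by
    have h1 : -1 < t := lt_of_le_of_ne (abs_le.mp htabs).1 (Ne.symm ht2)
    have h2 : t < 1 := lt_of_le_of_ne (abs_le.mp htabs).2 ht1
    nlinarith
  have hva : ⟪v, a⟫ = 0 := by
    rw [hvdef, inner_sub_left, real_inner_smul_left, hxa, haa]; ring
  have hav : ⟪a, v⟫ = 0 := by rw [real_inner_comm]; exact hva
  have hvv : ⟪v, v⟫ = 1 - t ^ 2 := by
    rw [hvdef]
    simp only [inner_sub_left, inner_sub_right, real_inner_smul_left,
      real_inner_smul_right, hxx, haa, hxa, ht.symm]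
    ring
  have hvn : ‖v‖ ^ 2 = 1 - t ^ 2 := by rw [← real_inner_self_eq_norm_sq, hvv]
  have hvpos : 0 < ‖v‖ := by
    have h0 : 0 < ‖v‖ ^ 2 := by rw [hvn]; linarith
    nlinarith [norm_nonneg v]
  have hxv : ⟪x, v⟫ = 1 - t ^ 2 := by
    rw [hvdef, inner_sub_right, real_inner_smul_right, hxx, hxa]; ring
  have hs3 : Real.sqrt 3 ^ 2 = 3 := Real.sq_sqrt (by norm_num)
  have hs3pos : (0:ℝ) < Real.sqrt 3 := Real.sqrt_pos.mpr (by norm_num)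
  set p : EuclideanSpace ℝ (Fin (n + 1)) :=
    (Real.sqrt 3 / 2) • (‖v‖⁻¹ • v) + (1 / 2 : ℝ) • a with hpdef
  have hpa : ⟪p, a⟫ = 1 / 2 := by
    rw [hpdef]
    simp only [inner_add_left, real_inner_smul_left, hva, haa]
    ring
  have hpp : ⟪p, p⟫ = 1 := by
    rw [hpdef]
    simp only [inner_add_left, inner_add_right, real_inner_smul_left,
      real_inner_smul_right, hva, hav, haa, hvv]
    field_simp
    nlinarith [hvn, hs3]
  have hpn : ‖p‖ = 1 := by
    have h2 : ‖p‖ ^ 2 = 1 := by rw [← real_inner_self_eq_norm_sq, hpp]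
    rw [← Real.sqrt_one, ← h2, Real.sqrt_sq (norm_nonneg p)]
  have hxp : ⟪x, p⟫ = Real.sqrt 3 / 2 * ‖v‖ + t / 2 := by
    rw [hpdef]
    simp only [inner_add_right, real_inner_smul_right, hxv, hxa]
    rw [← hvn]
    field_simp
  refine ⟨hpn, hpa, ?_⟩
  intro w hw hwa
  apply arccos_antitone
  rw [hxp]
  -- decompose w
  set w' : EuclideanSpace ℝ (Fin (n + 1)) := w - (1/2 : ℝ) • a with hw'def
  have haw : ⟪a, w⟫ = 1 / 2 := by rw [real_inner_comm]; exact hwa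
  have hw'n : ‖w'‖ ^ 2 = 3 / 4 := by
    rw [hw'def, norm_sub_sq_real, hw, norm_smul, ha, real_inner_smul_right, hwa]
    norm_num
  have hw'norm : ‖w'‖ = Real.sqrt 3 / 2 := by
    have h4 : Real.sqrt 4 = 2 := by
      rw [show (4:ℝ) = 2 ^ 2 by norm_num, Real.sqrt_sq (by norm_num : (0:ℝ) ≤ 2)]
    rw [← Real.sqrt_sq (norm_nonneg w'), hw'n,
      show (3/4 : ℝ) = 3 / 4 from rfl, Real.sqrt_div (by norm_num : (0:ℝ) ≤ 3), h4]
  have hvw' : ⟪v, w'⟫ ≤ ‖v‖ * (Real.sqrt 3 / 2) := by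
    rw [← hw'norm]; exact real_inner_le_norm v w'
  have hxw : ⟪x, w⟫ = ⟪v, w'⟫ + t / 2 := by
    have hxsplit : x = v + t • a := by rw [hvdef]; abel
    have hwsplit : w = w' + (1/2 : ℝ) • a := by rw [hw'def]; abel
    rw [hxsplit, hwsplit]
    simp only [inner_add_left, inner_add_right, real_inner_smul_left,
      real_inner_smul_right, hva, haa]
    have hvw'a : ⟪v, w⟫ = ⟪v, w'⟫ + (1/2) * ⟪v, a⟫ := by
      rw [hw'def, inner_sub_right, real_inner_smul_right]; ring
    have haw' : ⟪a, w'⟫ = 0 := by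
      rw [hw'def, inner_sub_right, real_inner_smul_right, haw, haa]; ring
    rw [haw']
    ring
  rw [hxw]
  nlinarith
end

section
/- Suppose c ∈ (0,1), D > 0, r > 0 with D < (1−c)r/4, and (xₙ) is a sequence in a metric space such that d(x₀,x₁) ≤ D and whenever d(z, x_{2n+1}) < r/2 and d(x_{2n}, x_{2n+1}) < r/2 one has d(x_{2n+1}, x_{2n+2}) ≤ c·d(x_{2n}, x_{2n+1}) and d(x_{2n+2}, x_{2n+3}) ≤ d(x_{2n+2}, x_{2n+1}), where d(z,x₀) ≤ D. Then by induction d(x_{2n}, x_{2n+1}) ≤ Dcⁿ, d(x_{2n+1}, x_{2n+2}) ≤ Dc^{n+1}, and d(z, x_{2n+1}) ≤ 2D(1 − c^{n+1})/(1 − c) for all n; consequently (xₙ) is Cauchy and converges to a limit z' with d(xₙ, z') ≤ D(√c)ⁿ(1+c)/(1−c) for all n, i.e., the convergence is linear with rate √c. -/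
open Filter Topology

set_option maxHeartbeats 1000000 in
/-- Quantitative convergence argument for alternating projections: a sequence whose
consecutive gaps contract by factor `c` every two steps (while it stays near `z`)
converges linearly with rate `√c`. -/
theorem alternating_projections_linear_convergence {X : Type*} [MetricSpace X]
    [CompleteSpace X] (c D r : ℝ) (hc0 : 0 < c) (hc1 : c < 1) (hD : 0 < D) (hr : 0 < r)
    (hDr : D < (1 - c) * r / 4) (z : X) (x : ℕ → X)
    (hzx0 : dist z (x 0) ≤ D) (hx01 : dist (x 0) (x 1) ≤ D)
    (hcontr : ∀ n : ℕ, dist z (x (2 * n + 1)) < r / 2 →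
      dist (x (2 * n)) (x (2 * n + 1)) < r / 2 →
        dist (x (2 * n + 1)) (x (2 * n + 2)) ≤ c * dist (x (2 * n)) (x (2 * n + 1)) ∧
        dist (x (2 * n + 2)) (x (2 * n + 3)) ≤ dist (x (2 * n + 2)) (x (2 * n + 1))) :
    (∀ n : ℕ, dist (x (2 * n)) (x (2 * n + 1)) ≤ D * c ^ n ∧
      dist (x (2 * n + 1)) (x (2 * n + 2)) ≤ D * c ^ (n + 1) ∧
      dist z (x (2 * n + 1)) ≤ 2 * D * (1 - c ^ (n + 1)) / (1 - c)) ∧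
    CauchySeq x ∧
    ∃ z' : X, Tendsto x atTop (nhds z') ∧
      ∀ n : ℕ, dist (x n) z' ≤ D * Real.sqrt c ^ n * (1 + c) / (1 - c) := by
  have h1c : (0:ℝ) < 1 - c := by linarith
  have hDr2 : 2 * D / (1 - c) < r / 2 := by
    rw [div_lt_iff₀ h1c]; nlinarith
  -- the main induction
  have key : ∀ n : ℕ, dist (x (2 * n)) (x (2 * n + 1)) ≤ D * c ^ n ∧
      dist (x (2 * n + 1)) (x (2 * n + 2)) ≤ D * c ^ (n + 1) ∧
      dist z (x (2 * n + 1)) ≤ 2 * D * (1 - c ^ (n + 1)) / (1 - c) := by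
    intro n
    induction n with
    | zero =>
      have hz1 : dist z (x 1) ≤ 2 * D :=
        le_trans (dist_triangle z (x 0) (x 1)) (by linarith)
      have hz1' : dist z (x (2*0+1)) < r / 2 := by
        norm_num
        calc dist z (x 1) ≤ 2 * D := hz1
        _ ≤ 2 * D / (1 - c) := by
            rw [le_div_iff₀ h1c]; nlinarith [dist_nonneg (x := z) (y := x 1)]
        _ < r / 2 := hDr2
      have hx01' : dist (x (2*0)) (x (2*0+1)) < r / 2 := by
        norm_num
        calc dist (x 0) (x 1) ≤ D := hx01
        _ < r/2 := by nlinarith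
      obtain ⟨h1, h2⟩ := hcontr 0 hz1' hx01'
      norm_num at h1 h2
      refine ⟨?_, ?_, ?_⟩
      · simpa using hx01
      · have hb : dist (x 1) (x 2) ≤ D * c ^ 1 := by
          rw [pow_one]
          calc dist (x 1) (x 2) ≤ c * dist (x 0) (x 1) := h1
          _ ≤ c * D := by nlinarith
          _ = D * c := by ring
        simpa using hb
      · have hb : dist z (x 1) ≤ 2 * D * (1 - c ^ 1) / (1 - c) := by
          rw [pow_one]
          have he : 2 * D * (1 - c) / (1 - c) = 2 * D := by field_simp
          rw [he]; exact hz1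
        simpa using hb
    | succ n ih =>
      obtain ⟨hA, hB, hC⟩ := ih
      have hcpow : (0:ℝ) < c ^ (n+1) := pow_pos hc0 _
      have hcpow1 : c ^ (n+1) ≤ 1 := pow_le_one₀ hc0.le hc1.le
      have hcn1 : (0:ℝ) < c ^ n := pow_pos hc0 _
      have hcn1' : c ^ n ≤ 1 := pow_le_one₀ hc0.le hc1.le
      -- hypotheses for hcontr n
      have hz1 : dist z (x (2*n+1)) < r / 2 := by
        calc dist z (x (2*n+1)) ≤ 2 * D * (1 - c ^ (n+1)) / (1 - c) := hC
        _ ≤ 2 * D / (1 - c) := by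
            rw [div_le_div_iff₀ h1c h1c]; nlinarith [mul_pos hD h1c]
        _ < r / 2 := hDr2
      have hx1 : dist (x (2*n)) (x (2*n+1)) < r / 2 := by
        calc dist (x (2*n)) (x (2*n+1)) ≤ D * c ^ n := hA
        _ ≤ D := by nlinarith
        _ < r / 2 := by nlinarith
      obtain ⟨h1, h2⟩ := hcontr n hz1 hx1
      have e1 : 2 * (n+1) = 2*n + 2 := by ring
      have e2 : 2 * (n+1) + 1 = 2*n + 3 := by ring
      have e3 : 2 * (n+1) + 2 = 2*n + 4 := by ring
      have e4 : 2 * (n+1) + 3 = 2*n + 5 := by ring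
      rw [e3, e2, e1]
      -- A(n+1)
      have hA' : dist (x (2*n+2)) (x (2*n+3)) ≤ D * c ^ (n+1) := by
        calc dist (x (2*n+2)) (x (2*n+3)) ≤ dist (x (2*n+2)) (x (2*n+1)) := h2
        _ = dist (x (2*n+1)) (x (2*n+2)) := dist_comm _ _
        _ ≤ D * c ^ (n+1) := hB
      -- C(n+1)
      have hC' : dist z (x (2*n+3)) ≤ 2 * D * (1 - c ^ (n+2)) / (1 - c) := by
        have tri := dist_triangle4 z (x (2*n+1)) (x (2*n+2)) (x (2*n+3))
        have heq : 2 * D * (1 - c ^ (n+2)) / (1 - c)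
            = 2 * D * (1 - c ^ (n+1)) / (1 - c) + 2 * D * c ^ (n+1) := by
          field_simp; ring
        rw [heq]; linarith
      refine ⟨hA', ?_, hC'⟩
      -- B(n+1) via hcontr (n+1)
      have hz2 : dist z (x (2*(n+1)+1)) < r / 2 := by
        rw [e2]
        have hcpow2 : (0:ℝ) < c ^ (n+2) := pow_pos hc0 _
        calc dist z (x (2*n+3)) ≤ 2 * D * (1 - c ^ (n+2)) / (1 - c) := hC'
        _ ≤ 2 * D / (1 - c) := by
            rw [div_le_div_iff₀ h1c h1c]; nlinarith [mul_pos hD h1c, pow_pos hc0 (n+2)]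
        _ < r / 2 := hDr2
      have hx2 : dist (x (2*(n+1))) (x (2*(n+1)+1)) < r / 2 := by
        rw [e2, e1]
        calc dist (x (2*n+2)) (x (2*n+3)) ≤ D * c ^ (n+1) := hA'
        _ ≤ D := by nlinarith
        _ < r / 2 := by nlinarith
      obtain ⟨h1', _⟩ := hcontr (n+1) hz2 hx2
      rw [e3, e2, e1] at h1'
      calc dist (x (2*n+3)) (x (2*n+4)) ≤ c * dist (x (2*n+2)) (x (2*n+3)) := h1'
      _ ≤ c * (D * c ^ (n+1)) := by nlinarith
      _ = D * c ^ (n+2) := by ring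
  refine ⟨key, ?_⟩
  -- rate √c basic facts
  set s := Real.sqrt c with hs
  have hs0 : 0 < s := Real.sqrt_pos.mpr hc0
  have hs2 : s ^ 2 = c := Real.sq_sqrt hc0.le
  have hs1 : s < 1 := by nlinarith
  -- gap bound for consecutive terms
  have hstep : ∀ n : ℕ, dist (x n) (x (n+1)) ≤ D * s ^ n := by
    intro n
    rcases Nat.even_or_odd n with ⟨k, hk⟩ | ⟨k, hk⟩
    · have hk2 : n = 2 * k := by omega
      subst hk2
      calc dist (x (2*k)) (x (2*k+1)) ≤ D * c ^ k := (key k).1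
      _ = D * s ^ (2*k) := by rw [pow_mul, hs2]
    · subst hk
      calc dist (x (2*k+1)) (x (2*k+1+1)) ≤ D * c ^ (k+1) := (key k).2.1
      _ = D * s ^ (2*k+2) := by
          rw [show 2*k+2 = 2*(k+1) by ring, pow_mul, hs2]
      _ ≤ D * s ^ (2*k+1) := by
          have := pow_le_pow_of_le_one hs0.le hs1.le (show 2*k+1 ≤ 2*k+2 by omega)
          nlinarith
  have hcauchy : CauchySeq x := cauchySeq_of_le_geometric s D hs1 hstep
  refine ⟨hcauchy, ?_⟩
  obtain ⟨z', hz'⟩ := cauchySeq_tendsto_of_complete hcauchy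
  refine ⟨z', hz', ?_⟩
  -- tail sums: B k := D*(1+c)*c^k/(1-c)
  set B : ℕ → ℝ := fun k => D * (1+c) * c ^ k / (1 - c) with hBdef
  have hBpos : ∀ k, 0 ≤ B k := by
    intro k
    apply div_nonneg _ h1c.le
    positivity
  have hBgap : ∀ k, B k - B (k+1) = D * c ^ k + D * c ^ (k+1) := by
    intro k; simp only [hBdef]; field_simp; ring
  have claim2 : ∀ n N : ℕ, dist (x (2*n)) (x (2*(n+N))) ≤ B n - B (n+N) := by
    intro n N
    induction N with
    | zero => simp
    | succ N ih =>
      have e1 : 2 * (n + (N+1)) = 2*(n+N) + 2 := by ring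
      rw [e1]
      have tri := dist_triangle4 (x (2*n)) (x (2*(n+N))) (x (2*(n+N)+1)) (x (2*(n+N)+2))
      have h1 := (key (n+N)).1
      have h2 := (key (n+N)).2.1
      have hg := hBgap (n+N)
      have e2 : n + (N+1) = (n+N) + 1 := by ring
      rw [e2]
      linarith
  -- limit bound for even indices
  have heven : ∀ n : ℕ, dist (x (2*n)) z' ≤ B n := by
    intro n
    have htt : Tendsto (fun N => 2*(n+N)) atTop atTop :=
      tendsto_atTop_mono (fun N => (by omega : N ≤ 2*(n+N))) tendsto_id
    have hlim : Tendsto (fun N => dist (x (2*n)) (x (2*(n+N)))) atTop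
        (𝓝 (dist (x (2*n)) z')) :=
      tendsto_const_nhds.dist (hz'.comp htt)
    exact le_of_tendsto hlim (Filter.Eventually.of_forall fun N =>
      le_trans (claim2 n N) (by linarith [hBpos (n+N)]))
  intro m
  rcases Nat.even_or_odd m with ⟨k, hk⟩ | ⟨k, hk⟩
  · have hk2 : m = 2 * k := by omega
    subst hk2
    calc dist (x (2*k)) z' ≤ B k := heven k
    _ = D * s ^ (2*k) * (1+c) / (1-c) := by
        simp only [hBdef]; rw [pow_mul, hs2]; ring
  · subst hk
    have h2 := (key k).2.1
    have he : dist (x (2*k+2)) z' ≤ B (k+1) := by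
      have := heven (k+1)
      rwa [show 2*(k+1) = 2*k+2 by ring] at this
    have tri := dist_triangle (x (2*k+1)) (x (2*k+2)) z'
    have hbound : dist (x (2*k+1)) z' ≤ 2 * D * c ^ (k+1) / (1-c) := by
      have heq : D * c ^ (k+1) + B (k+1) = 2 * D * c ^ (k+1) / (1-c) := by
        simp only [hBdef]; field_simp; ring
      linarith
    calc dist (x (2*k+1)) z' ≤ 2 * D * c ^ (k+1) / (1-c) := hbound
    _ ≤ D * s ^ (2*k+1) * (1+c) / (1-c) := by
        have hsk : s ^ (2*k+1) = c ^ k * s := by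
          rw [pow_succ, pow_mul, hs2]
        rw [hsk, div_le_div_iff₀ h1c h1c]
        have hck : (0:ℝ) < c ^ k := pow_pos hc0 _
        have key2 : 2 * c ≤ s * (1 + c) := by nlinarith [sq_nonneg (s - 1)]
        have : 2 * (c ^ k * c) ≤ c ^ k * (s * (1+c)) := by nlinarith
        calc 2 * D * c ^ (k+1) * (1-c) = D * (1-c) * (2 * (c^k * c)) := by ring
        _ ≤ D * (1-c) * (c^k * (s * (1+c))) := by nlinarith [mul_pos hD h1c]
        _ = D * (c ^ k * s) * (1+c) * (1-c) := by ring
end
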